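/- Let U be a continuous real-valued function with compact support contained in the segment [−a, a] and let λ ∈ ℂ with Re λ > 0. Then λ is an eigenvalue of the Zakharov-Shabat system n1' − λ n1 = U n2, n2' + λ n2 = −U n1 — that is, there exists a solution (n1, n2) of the system on [−a, a] satisfying the boundary conditions n1(−a) = 1, n2(−a) = 0 and n1(a) = 0 — if and only if the dispersion equation Σ_{n=0}^∞ λⁿ ( e^{(−1)ⁿ Q(a)} X̃⁽ⁿ⁾(a) + e^{(−1)ⁿ⁺¹ Q(a)} X⁽ⁿ⁾(a) ) = 0 holds. -/

import Mathlib

/-!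
Write `X^ε_n = zsPow Q x0 ε n` and, for `σ = ±1`, `B_σ = n₁ + σ i n₂`: the system becomes
`B_σ' = -σ i U B_σ + λ B_{-σ}`, and the gauge `B_σ = e^{-σQ} S_σ` (this is `zsDiag`) turns it
into `S_σ' = λ e^{2σQ} S_{-σ}`, `S_σ(x0) = 1`. This is solved by the series
`S_σ = Σ λⁿ X^{σ(-1)ⁿ}_n` (`zsSeries`), which converges and may be differentiated termwise because
`Q` is purely imaginary, so that `‖X^ε_n(x)‖ ≤ |x - x0|ⁿ / n!`. The resulting solution of the
initial value problem has `2 n₁(a) = B₁(a) + B₋₁(a)`, which is the dispersion sum; since the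
system is linear with continuous coefficients, this is the only solution.
-/
open Set MeasureTheory Filter Finset
open scoped Topology Interval

/-- The auxiliary functions for the Zakharov-Shabat system: `zsPow Q x0 ε n` is
obtained by `n` recursive integrations with weights `exp(ε (−1)ᵐ 2Q)` at step `m`. -/
noncomputable def zsPow (Q : ℝ → ℂ) (x0 : ℝ) (eps : ℂ) : ℕ → ℝ → ℂ
  | 0 => fun _ => 1
  | n + 1 => fun x => ∫ s in x0..x,
      zsPow Q x0 eps n s * Complex.exp (eps * (-1) ^ (n + 1) * 2 * Q s)

/-- The antiderivative `Q(x) = i ∫_{x0}^x U(t) dt` of `q = iU`. -/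
noncomputable def zsQ (U : ℝ → ℝ) (x0 : ℝ) (x : ℝ) : ℂ :=
  Complex.I * ((∫ t in x0..x, U t : ℝ) : ℂ)

theorem norm_intervalIntegral_le_pow_div_factorial {E : Type*} [NormedAddCommGroup E]
    [NormedSpace ℝ E] {f : ℝ → E} {x0 x : ℝ} {n : ℕ}
    (hf : ∀ s ∈ Ι x0 x, ‖f s‖ ≤ |s - x0| ^ n / n.factorial) :
    ‖∫ s in x0..x, f s‖ ≤ |x - x0| ^ (n + 1) / (n + 1).factorial := by
  rw [intervalIntegral.norm_integral_eq_norm_integral_uIoc]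
  calc ‖∫ s in Ι x0 x, f s‖ ≤ ∫ s in Ι x0 x, |s - x0| ^ n / n.factorial :=
        norm_integral_le_of_norm_le (Continuous.integrableOn_uIoc (by fun_prop))
          (ae_restrict_of_forall_mem measurableSet_uIoc hf)
    _ = |x - x0| ^ (n + 1) / (n + 1).factorial := by
        rw [integral_div, integral_pow_abs_sub_uIoc, Nat.factorial_succ]
        push_cast
        field_simp

theorem Complex.norm_exp_ofReal_mul_of_re_eq_zero (r : ℝ) {z : ℂ} (hz : z.re = 0) :
    ‖Complex.exp (r * z)‖ = 1 := by
  rw [Complex.norm_exp, Complex.re_ofReal_mul, hz, mul_zero, Real.exp_zero]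

section zsPow

variable {Q : ℝ → ℂ} {x0 : ℝ}

theorem zsPow_succ_self (eps : ℂ) (n : ℕ) : zsPow Q x0 eps (n + 1) x0 = 0 := by
  simp [zsPow]

theorem continuous_zsPow (hQc : Continuous Q) (eps : ℂ) :
    ∀ n, Continuous (zsPow Q x0 eps n)
  | 0 => continuous_const
  | n + 1 => by
    have hc : Continuous fun s => zsPow Q x0 eps n s *
        Complex.exp (eps * (-1) ^ (n + 1) * 2 * Q s) :=
      (continuous_zsPow hQc eps n).mul (by fun_prop)
    exact intervalIntegral.continuous_primitive (fun a b => hc.intervalIntegrable a b) x0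

theorem hasDerivAt_zsPow_succ (hQc : Continuous Q) (eps : ℂ) (n : ℕ) (x : ℝ) :
    HasDerivAt (zsPow Q x0 eps (n + 1))
      (zsPow Q x0 eps n x * Complex.exp (eps * (-1) ^ (n + 1) * 2 * Q x)) x := by
  have hc : Continuous fun s => zsPow Q x0 eps n s *
      Complex.exp (eps * (-1) ^ (n + 1) * 2 * Q s) :=
    (continuous_zsPow hQc eps n).mul (by fun_prop)
  exact intervalIntegral.integral_hasDerivAt_right (hc.intervalIntegrable _ _)
    (hc.stronglyMeasurableAtFilter _ _) hc.continuousAt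

theorem norm_zsPow_le (hQre : ∀ s, (Q s).re = 0) (eps : ℝ) :
    ∀ (n : ℕ) (x : ℝ), ‖zsPow Q x0 eps n x‖ ≤ |x - x0| ^ n / n.factorial
  | 0, x => by simp [zsPow]
  | n + 1, x => by
    refine norm_intervalIntegral_le_pow_div_factorial fun s _ => ?_
    have hw : (eps : ℂ) * (-1) ^ (n + 1) * 2 * Q s =
        ((eps * (-1) ^ (n + 1) * 2 : ℝ) : ℂ) * Q s := by
      push_cast; ring
    rw [norm_mul, hw, Complex.norm_exp_ofReal_mul_of_re_eq_zero _ (hQre s), mul_one]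
    exact norm_zsPow_le hQre eps n s

end zsPow

noncomputable def zsSeries (Q : ℝ → ℂ) (x0 : ℝ) (lam : ℂ) (σ : ℝ) (x : ℝ) : ℂ :=
  ∑' n : ℕ, lam ^ n * zsPow Q x0 ↑(σ * (-1) ^ n) n x

section zsSeries

variable {Q : ℝ → ℂ} {x0 : ℝ}

theorem summable_zsPow_series (hQre : ∀ s, (Q s).re = 0) (lam : ℂ) (eps : ℕ → ℝ) (x : ℝ) :
    Summable fun n : ℕ => lam ^ n * zsPow Q x0 (eps n) n x := by
  refine .of_norm_bounded (Real.summable_pow_div_factorial (‖lam‖ * |x - x0|)) fun n => ?_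
  rw [norm_mul, norm_pow, mul_pow, mul_div_assoc]
  exact mul_le_mul_of_nonneg_left (norm_zsPow_le hQre (eps n) n x) (by positivity)

theorem zsSeries_self (lam : ℂ) (σ : ℝ) : zsSeries Q x0 lam σ x0 = 1 := by
  rw [zsSeries, tsum_eq_single 0]
  · simp [zsPow]
  · rintro (_ | n) h
    · exact absurd rfl h
    · rw [zsPow_succ_self, mul_zero]

-- the last weight of `X^{σ(-1)^(n+1)}_{n+1}` is `exp(σ 2 Q)`, whatever the parity of `n`
theorem hasDerivAt_zsSeries_term_succ (hQc : Continuous Q) (lam : ℂ) (σ : ℝ) (n : ℕ) (y : ℝ) :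
    HasDerivAt (fun y => lam ^ (n + 1) * zsPow Q x0 ↑(σ * (-1) ^ (n + 1)) (n + 1) y)
      (lam * Complex.exp (σ * 2 * Q y) * (lam ^ n * zsPow Q x0 ↑(-σ * (-1) ^ n) n y)) y := by
  have heps : σ * (-1) ^ (n + 1) = -σ * (-1) ^ n := by ring
  have hweight : ((-σ * (-1) ^ n : ℝ) : ℂ) * (-1) ^ (n + 1) * 2 * Q y = σ * 2 * Q y := by
    have hsq : ((-1 : ℂ)) ^ n * (-1) ^ n = 1 := by rw [← mul_pow]; norm_num
    push_cast
    linear_combination (σ * 2 * Q y) * hsq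
  refine ((hasDerivAt_zsPow_succ hQc _ n y).const_mul (lam ^ (n + 1))).congr_deriv ?_
  rw [heps, hweight]
  ring

theorem hasDerivAt_zsSeries (hQc : Continuous Q) (hQre : ∀ s, (Q s).re = 0) (lam : ℂ) (σ : ℝ)
    (x : ℝ) :
    HasDerivAt (zsSeries Q x0 lam σ)
      (lam * Complex.exp (σ * 2 * Q x) * zsSeries Q x0 lam (-σ) x) x := by
  set g : ℕ → ℝ → ℂ := fun n y => lam ^ (n + 1) * zsPow Q x0 ↑(σ * (-1) ^ (n + 1)) (n + 1) y
  set g' : ℕ → ℝ → ℂ := fun n y =>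
    lam * Complex.exp (σ * 2 * Q y) * (lam ^ n * zsPow Q x0 ↑(-σ * (-1) ^ n) n y)
  have hsplit : zsSeries Q x0 lam σ = fun y => 1 + ∑' n, g n y := by
    funext y
    rw [zsSeries, (summable_zsPow_series hQre lam _ y).tsum_eq_zero_add]
    simp [g, zsPow]
  have hu : Summable fun n : ℕ => ‖lam‖ * ((‖lam‖ * (|x - x0| + 1)) ^ n / n.factorial) :=
    (Real.summable_pow_div_factorial _).mul_left _
  have hbound : ∀ n, ∀ y ∈ Metric.ball x 1,
      ‖g' n y‖ ≤ ‖lam‖ * ((‖lam‖ * (|x - x0| + 1)) ^ n / n.factorial) := by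
    intro n y hxy
    have hy : |y - x0| ≤ |x - x0| + 1 := (abs_sub_le y x x0).trans (by
      rw [← Real.dist_eq y x]
      linarith [Metric.mem_ball.mp hxy])
    have hw : (σ : ℂ) * 2 * Q y = ((σ * 2 : ℝ) : ℂ) * Q y := by push_cast; ring
    rw [norm_mul, norm_mul, hw, Complex.norm_exp_ofReal_mul_of_re_eq_zero _ (hQre y), mul_one,
      norm_mul, norm_pow, mul_pow, mul_div_assoc]
    gcongr
    exact (norm_zsPow_le hQre _ n y).trans (by gcongr)
  have hg0 : Summable fun n => g n x :=
    (summable_nat_add_iff (f := fun n => lam ^ n * zsPow Q x0 ↑(σ * (-1) ^ n) n x) 1).mpr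
      (summable_zsPow_series hQre lam _ x)
  have htail := hasDerivAt_tsum_of_isPreconnected hu Metric.isOpen_ball
    (convex_ball x 1).isPreconnected (fun n y _ => hasDerivAt_zsSeries_term_succ hQc lam σ n y)
    hbound (Metric.mem_ball_self one_pos) hg0 (Metric.mem_ball_self one_pos)
  rw [hsplit]
  refine (htail.const_add 1).congr_deriv ?_
  rw [tsum_mul_left, zsSeries]

end zsSeries

noncomputable def zsDiag (Q : ℝ → ℂ) (x0 : ℝ) (lam : ℂ) (σ : ℝ) (x : ℝ) : ℂ :=
  Complex.exp (-(σ * Q x)) * zsSeries Q x0 lam σ x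

section zsDiag

variable {Q : ℝ → ℂ} {x0 : ℝ}

theorem zsDiag_self (hQ0 : Q x0 = 0) (lam : ℂ) (σ : ℝ) : zsDiag Q x0 lam σ x0 = 1 := by
  simp [zsDiag, zsSeries_self, hQ0]

theorem hasDerivAt_zsDiag (hQc : Continuous Q) (hQre : ∀ s, (Q s).re = 0) (lam : ℂ) (σ : ℝ)
    {x : ℝ} {q : ℂ} (hq : HasDerivAt Q q x) :
    HasDerivAt (zsDiag Q x0 lam σ)
      (-(σ * q) * zsDiag Q x0 lam σ x + lam * zsDiag Q x0 lam (-σ) x) x := by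
  have hexp : Complex.exp (-(σ * Q x)) * Complex.exp (σ * 2 * Q x) =
      Complex.exp (-(↑(-σ) * Q x)) := by
    rw [← Complex.exp_add]
    push_cast
    ring_nf
  refine (((hq.const_mul (σ : ℂ)).neg.cexp).mul
    (hasDerivAt_zsSeries hQc hQre lam σ x)).congr_deriv ?_
  simp only [zsDiag]
  linear_combination (lam * zsSeries Q x0 lam (-σ) x) * hexp

theorem tsum_dispersion_eq_zsDiag (hQre : ∀ s, (Q s).re = 0) (lam : ℂ) (x : ℝ) :
    (∑' n : ℕ, lam ^ n *
      (Complex.exp ((-1) ^ n * Q x) * zsPow Q x0 (-1) n x +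
        Complex.exp ((-1) ^ (n + 1) * Q x) * zsPow Q x0 1 n x)) =
      zsDiag Q x0 lam 1 x + zsDiag Q x0 lam (-1) x := by
  have hterm : ∀ n : ℕ, lam ^ n *
      (Complex.exp ((-1) ^ n * Q x) * zsPow Q x0 (-1) n x +
        Complex.exp ((-1) ^ (n + 1) * Q x) * zsPow Q x0 1 n x) =
      Complex.exp (-(↑(1 : ℝ) * Q x)) * (lam ^ n * zsPow Q x0 ↑(1 * (-1) ^ n : ℝ) n x) +
        Complex.exp (-(↑(-1 : ℝ) * Q x)) * (lam ^ n * zsPow Q x0 ↑(-1 * (-1) ^ n : ℝ) n x) := by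
    intro n
    rcases Nat.even_or_odd n with hn | hn <;>
    · simp only [hn.neg_one_pow, pow_succ, one_mul, mul_one, mul_neg, neg_mul, neg_neg,
        Complex.ofReal_one, Complex.ofReal_neg]
      ring
  rw [tsum_congr hterm, ((summable_zsPow_series hQre lam _ x).mul_left _).tsum_add
    ((summable_zsPow_series hQre lam _ x).mul_left _), tsum_mul_left, tsum_mul_left]
  rfl

end zsDiag

section zsQ

variable {U : ℝ → ℝ} {x0 : ℝ}

theorem zsQ_self : zsQ U x0 x0 = 0 := by simp [zsQ]

theorem zsQ_re (x : ℝ) : (zsQ U x0 x).re = 0 := by simp [zsQ]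

theorem hasDerivAt_zsQ (hU : Continuous U) (x : ℝ) :
    HasDerivAt (zsQ U x0) (Complex.I * U x) x :=
  (intervalIntegral.integral_hasDerivAt_right (hU.intervalIntegrable _ _)
    (hU.stronglyMeasurableAtFilter _ _) hU.continuousAt).ofReal_comp.const_mul Complex.I

theorem continuous_zsQ (hU : Continuous U) : Continuous (zsQ U x0) :=
  continuous_iff_continuousAt.mpr fun x => (hasDerivAt_zsQ hU x).continuousAt

end zsQ

noncomputable def zsN1 (U : ℝ → ℝ) (x0 : ℝ) (lam : ℂ) (x : ℝ) : ℂ :=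
  (zsDiag (zsQ U x0) x0 lam 1 x + zsDiag (zsQ U x0) x0 lam (-1) x) / 2

noncomputable def zsN2 (U : ℝ → ℝ) (x0 : ℝ) (lam : ℂ) (x : ℝ) : ℂ :=
  Complex.I * (zsDiag (zsQ U x0) x0 lam (-1) x - zsDiag (zsQ U x0) x0 lam 1 x) / 2

section zsSolution

variable {U : ℝ → ℝ} {x0 : ℝ}

theorem zsN1_self (lam : ℂ) : zsN1 U x0 lam x0 = 1 := by
  simp only [zsN1, zsDiag_self zsQ_self]
  norm_num

theorem zsN2_self (lam : ℂ) : zsN2 U x0 lam x0 = 0 := by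
  simp [zsN2, zsDiag_self zsQ_self]

theorem hasDerivAt_zsDiag_zsQ (hU : Continuous U) (lam : ℂ) (σ : ℝ) (x : ℝ) :
    HasDerivAt (zsDiag (zsQ U x0) x0 lam σ)
      (-(σ * (Complex.I * U x)) * zsDiag (zsQ U x0) x0 lam σ x +
        lam * zsDiag (zsQ U x0) x0 lam (-σ) x) x :=
  hasDerivAt_zsDiag (continuous_zsQ hU) zsQ_re lam σ (hasDerivAt_zsQ hU x)

theorem hasDerivAt_zsN1 (hU : Continuous U) (lam : ℂ) (x : ℝ) :
    HasDerivAt (zsN1 U x0 lam) (lam * zsN1 U x0 lam x + U x * zsN2 U x0 lam x) x := by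
  refine (((hasDerivAt_zsDiag_zsQ hU lam 1 x).add
    (hasDerivAt_zsDiag_zsQ hU lam (-1) x)).div_const 2).congr_deriv ?_
  simp only [zsN1, zsN2, neg_neg]
  push_cast
  ring

theorem hasDerivAt_zsN2 (hU : Continuous U) (lam : ℂ) (x : ℝ) :
    HasDerivAt (zsN2 U x0 lam) (-(lam * zsN2 U x0 lam x) - U x * zsN1 U x0 lam x) x := by
  refine ((((hasDerivAt_zsDiag_zsQ hU lam (-1) x).sub
    (hasDerivAt_zsDiag_zsQ hU lam 1 x)).const_mul Complex.I).div_const 2).congr_deriv ?_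
  simp only [zsN1, zsN2, neg_neg]
  push_cast
  linear_combination (U x * (zsDiag (zsQ U x0) x0 lam 1 x + zsDiag (zsQ U x0) x0 lam (-1) x) / 2) *
    Complex.I_mul_I

theorem tsum_dispersion_eq_two_mul_zsN1 (lam : ℂ) (x : ℝ) :
    (∑' n : ℕ, lam ^ n *
      (Complex.exp ((-1) ^ n * zsQ U x0 x) * zsPow (zsQ U x0) x0 (-1) n x +
        Complex.exp ((-1) ^ (n + 1) * zsQ U x0 x) * zsPow (zsQ U x0) x0 1 n x)) =
      2 * zsN1 U x0 lam x := by
  rw [tsum_dispersion_eq_zsDiag zsQ_re, zsN1]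
  ring

end zsSolution

theorem linear_ODE_solution_unique_of_mem_Icc {𝕜 E : Type*} [NontriviallyNormedField 𝕜]
    [NormedAddCommGroup E] [NormedSpace ℝ E] [NormedSpace 𝕜 E] {A : ℝ → E →L[𝕜] E} {a b : ℝ}
    (hA : ContinuousOn A (Icc a b)) {f g : ℝ → E}
    (hf : ∀ t ∈ Icc a b, HasDerivAt f (A t (f t)) t)
    (hg : ∀ t ∈ Icc a b, HasDerivAt g (A t (g t)) t) (h0 : f a = g a) :
    EqOn f g (Icc a b) := by
  obtain ⟨C, hC⟩ := isCompact_Icc.exists_bound_of_continuousOn hA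
  have hLip : ∀ t ∈ Ico a b, LipschitzOnWith C.toNNReal (A t) univ := fun t ht =>
    ((A t).lipschitz.weaken (by
      simpa using Real.toNNReal_le_toNNReal (hC t (Ico_subset_Icc_self ht)))).lipschitzOnWith
  exact ODE_solution_unique_of_mem_Icc_right hLip
    (fun t ht => (hf t ht).continuousAt.continuousWithinAt)
    (fun t ht => (hf t (Ico_subset_Icc_self ht)).hasDerivWithinAt) (fun _ _ => mem_univ _)
    (fun t ht => (hg t ht).continuousAt.continuousWithinAt)
    (fun t ht => (hg t (Ico_subset_Icc_self ht)).hasDerivWithinAt) (fun _ _ => mem_univ _) h0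

noncomputable def zsOp (lam u : ℂ) : ℂ × ℂ →L[ℂ] ℂ × ℂ :=
  lam • (ContinuousLinearMap.fst ℂ ℂ ℂ).prod (-ContinuousLinearMap.snd ℂ ℂ ℂ) +
    u • (ContinuousLinearMap.snd ℂ ℂ ℂ).prod (-ContinuousLinearMap.fst ℂ ℂ ℂ)

theorem zsOp_apply (lam u : ℂ) (p : ℂ × ℂ) :
    zsOp lam u p = (lam * p.1 + u * p.2, -(lam * p.2) - u * p.1) := by
  simp only [zsOp, add_apply, smul_apply, neg_apply, ContinuousLinearMap.prod_apply,
    ContinuousLinearMap.coe_fst', ContinuousLinearMap.coe_snd', Prod.smul_mk, smul_eq_mul,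
    Prod.mk_add_mk]
  exact Prod.ext (by ring) (by ring)

theorem continuous_zsOp {U : ℝ → ℝ} (hU : Continuous U) (lam : ℂ) :
    Continuous fun t => zsOp lam (U t) := by
  unfold zsOp
  fun_prop

theorem HasDerivAt.prodMk_zsOp {n1 n2 : ℝ → ℂ} {lam u : ℂ} {x : ℝ}
    (h1 : HasDerivAt n1 (lam * n1 x + u * n2 x) x)
    (h2 : HasDerivAt n2 (-(lam * n2 x) - u * n1 x) x) :
    HasDerivAt (fun t => (n1 t, n2 t)) (zsOp lam u (n1 x, n2 x)) x := by
  rw [zsOp_apply]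
  exact h1.prodMk h2

theorem zakharov_shabat_dispersion_equation_general
    (a : ℝ) (ha : 0 < a) (U : ℝ → ℝ) (hU : Continuous U)
    (lam : ℂ) :
    (∃ n1 n2 : ℝ → ℂ,
      (∀ x ∈ Set.Icc (-a) a,
        HasDerivAt n1 (lam * n1 x + (U x : ℂ) * n2 x) x) ∧
      (∀ x ∈ Set.Icc (-a) a,
        HasDerivAt n2 (-(lam * n2 x) - (U x : ℂ) * n1 x) x) ∧
      n1 (-a) = 1 ∧ n2 (-a) = 0 ∧ n1 a = 0) ↔
    (∑' n : ℕ, lam ^ n *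
      (Complex.exp ((-1) ^ n * zsQ U (-a) a) * zsPow (zsQ U (-a)) (-a) (-1) n a +
        Complex.exp ((-1) ^ (n + 1) * zsQ U (-a) a) *
          zsPow (zsQ U (-a)) (-a) 1 n a)) = 0 := by
  rw [tsum_dispersion_eq_two_mul_zsN1, mul_eq_zero, or_iff_right two_ne_zero]
  constructor
  · rintro ⟨n1, n2, h1, h2, hn1, hn2, hend⟩
    have huniq := linear_ODE_solution_unique_of_mem_Icc (continuous_zsOp hU lam).continuousOn
      (fun t ht => (h1 t ht).prodMk_zsOp (h2 t ht))
      (fun t _ => (hasDerivAt_zsN1 hU lam t).prodMk_zsOp (hasDerivAt_zsN2 hU lam t))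
      (by rw [hn1, hn2, zsN1_self, zsN2_self])
    rw [← hend]
    exact (congrArg Prod.fst (huniq ⟨by linarith, le_rfl⟩)).symm
  · intro hN1
    exact ⟨zsN1 U (-a) lam, zsN2 U (-a) lam, fun x _ => hasDerivAt_zsN1 hU lam x,
      fun x _ => hasDerivAt_zsN2 hU lam x, zsN1_self lam, zsN2_self lam, hN1⟩

theorem zakharov_shabat_dispersion_equation
    (a : ℝ) (ha : 0 < a) (U : ℝ → ℝ) (hU : Continuous U)
    (hsupp : Function.support U ⊆ Set.Icc (-a) a)
    (lam : ℂ) (hlam : 0 < lam.re) :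
    (∃ n1 n2 : ℝ → ℂ,
      (∀ x ∈ Set.Icc (-a) a,
        HasDerivAt n1 (lam * n1 x + (U x : ℂ) * n2 x) x) ∧
      (∀ x ∈ Set.Icc (-a) a,
        HasDerivAt n2 (-(lam * n2 x) - (U x : ℂ) * n1 x) x) ∧
      n1 (-a) = 1 ∧ n2 (-a) = 0 ∧ n1 a = 0) ↔
    (∑' n : ℕ, lam ^ n *
      (Complex.exp ((-1) ^ n * zsQ U (-a) a) * zsPow (zsQ U (-a)) (-a) (-1) n a +
        Complex.exp ((-1) ^ (n + 1) * zsQ U (-a) a) *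
          zsPow (zsQ U (-a)) (-a) 1 n a)) = 0 :=
  zakharov_shabat_dispersion_equation_general a ha U hU lam
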